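/- (Identifiable Natural Counterfactuals, Theorem 4.1, model-independence form.) Fix n : ℕ and parent sets pa : Fin n → Finset (Fin n) with every j ∈ pa i satisfying j < i. Let M = (pa, f, μ) and M' = (pa, g, μ') be two topologically ordered SCMs with these parent sets, both satisfying locality, such that every slice u ↦ f i v u and u ↦ g i v u is a strictly monotone increasing bijection of ℝ. Suppose the two models induce identical conditional distributions: Measure.map (f i p) (μ i) = Measure.map (g i p) (μ' i) for every i : Fin n and every p : Fin n → ℝ, and that the CDF of each Measure.map (f i p) (μ i) is injective. Then the two models produce identical counterfactuals: for every observed instance v : Fin n → ℝ, every intervention set C ⊆ Fin n and target values c : Fin n → ℝ, one has solveC_f (solve_f⁻¹ v) = solveC_g (solve_g⁻¹ v), where solve_f, solve_g are the solution maps of M, M' (bijections, with inverses given by abduction) and solveC_f, solveC_g are the solution maps of the corresponding intervened models. -/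

import Mathlib

/-!
Abduction recovers the noise coordinatewise: `u i` with `f i v (u i) = v i` in one model and
`u' i` with `g i v (u' i) = v i` in the other. A strictly increasing slice preserves CDF
values, so `F_{μ i}(u i)` and `F_{μ' i}(u' i)` both equal the CDF of the common conditional
distribution at `v i`. For any other parent configuration `p`, the values `f i p (u i)` and
`g i p (u' i)` therefore have the same CDF value under the common distribution `ν i p`, and
injectivity of that CDF makes them equal. Propagating along the topological order, the two
intervened models compute the same values.
-/

open MeasureTheory

/-- The cumulative distribution function of a Borel measure on ℝ:
`F_m(x) = m((-∞, x])`. -/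
noncomputable def cdfOf (m : Measure ℝ) (x : ℝ) : ℝ := (m (Set.Iic x)).toReal

lemma cdfOf_map_apply_of_strictMono {φ : ℝ → ℝ} (hφ : StrictMono φ) (m : Measure ℝ) (u : ℝ) :
    cdfOf (m.map φ) (φ u) = cdfOf m u := by
  unfold cdfOf
  rw [Measure.map_apply hφ.monotone.measurable measurableSet_Iic]
  congr 2
  ext x
  simp [hφ.le_iff_le]

lemma cdfOf_eq_of_map_eq {φ ψ : ℝ → ℝ} (hφ : StrictMono φ) (hψ : StrictMono ψ)
    {m m' : Measure ℝ} (hmap : m.map φ = m'.map ψ) {a b : ℝ} (hab : φ a = ψ b) :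
    cdfOf m a = cdfOf m' b := by
  rw [← cdfOf_map_apply_of_strictMono hφ m a, ← cdfOf_map_apply_of_strictMono hψ m' b, hmap, hab]

lemma apply_eq_of_map_eq {P : Type*} {φ ψ : P → ℝ → ℝ}
    (hφ : ∀ p, StrictMono (φ p)) (hψ : ∀ p, StrictMono (ψ p)) {m m' : Measure ℝ}
    (hmap : ∀ p, m.map (φ p) = m'.map (ψ p)) (hinj : ∀ p, Function.Injective (cdfOf (m.map (φ p))))
    {a b : ℝ} {p₀ : P} (hab : φ p₀ a = ψ p₀ b) (p : P) :
    φ p a = ψ p b := by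
  have hquantile := cdfOf_eq_of_map_eq (hφ p₀) (hψ p₀) (hmap p₀) hab
  apply hinj p
  rw [cdfOf_map_apply_of_strictMono (hφ p), hquantile, hmap p,
    cdfOf_map_apply_of_strictMono (hψ p)]

lemma eq_of_eq_of_forall_lt_eq {ι α : Type*} [LT ι] [WellFoundedLT ι] {x y : ι → α}
    (h : ∀ i, (∀ j < i, x j = y j) → x i = y i) : x = y :=
  funext fun i => WellFoundedLT.induction i h

section Abduction

variable {ι : Type*} [LT ι] [WellFoundedLT ι] {pa : ι → Finset ι} {f : ι → (ι → ℝ) → ℝ → ℝ}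

lemma solve_abduct_eq (hpa : ∀ i, ∀ j ∈ pa i, j < i)
    (hloc : ∀ i, ∀ v w : ι → ℝ, (∀ j ∈ pa i, v j = w j) → f i v = f i w)
    (hsurj : ∀ i v, Function.Surjective (f i v)) {solve : (ι → ℝ) → (ι → ℝ)}
    (hsolve : ∀ u i, solve u i = f i (solve u) (u i)) (v : ι → ℝ) :
    solve (fun i => Function.invFun (f i v) (v i)) = v :=
  eq_of_eq_of_forall_lt_eq fun i IH => by
    rw [hsolve, hloc i _ v fun j hj => IH j (hpa i j hj)]
    exact Function.rightInverse_invFun (hsurj i v) (v i)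

lemma solve_invFun_eq (hpa : ∀ i, ∀ j ∈ pa i, j < i)
    (hloc : ∀ i, ∀ v w : ι → ℝ, (∀ j ∈ pa i, v j = w j) → f i v = f i w)
    (hsurj : ∀ i v, Function.Surjective (f i v)) {solve : (ι → ℝ) → (ι → ℝ)}
    (hsolve : ∀ u i, solve u i = f i (solve u) (u i)) (v : ι → ℝ) :
    solve (Function.invFun solve v) = v :=
  Function.invFun_eq ⟨_, solve_abduct_eq hpa hloc hsurj hsolve v⟩

end Abduction

theorem natural_counterfactuals_identifiable_general (n : ℕ) (pa : Fin n → Finset (Fin n))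
    (hpa : ∀ i : Fin n, ∀ j ∈ pa i, j < i)
    (f g : Fin n → (Fin n → ℝ) → ℝ → ℝ)
    (hlocf : ∀ i : Fin n, ∀ v w : Fin n → ℝ, (∀ j ∈ pa i, v j = w j) → f i v = f i w)
    (hlocg : ∀ i : Fin n, ∀ v w : Fin n → ℝ, (∀ j ∈ pa i, v j = w j) → g i v = g i w)
    (hmonof : ∀ (i : Fin n) (v : Fin n → ℝ), StrictMono (f i v))
    (hmonog : ∀ (i : Fin n) (v : Fin n → ℝ), StrictMono (g i v))
    (hbijf : ∀ (i : Fin n) (v : Fin n → ℝ), Function.Bijective (f i v))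
    (hbijg : ∀ (i : Fin n) (v : Fin n → ℝ), Function.Bijective (g i v))
    (μ μ' : Fin n → Measure ℝ)
    (heq : ∀ (i : Fin n) (p : Fin n → ℝ),
      Measure.map (f i p) (μ i) = Measure.map (g i p) (μ' i))
    (hinj : ∀ (i : Fin n) (p : Fin n → ℝ),
      Function.Injective (cdfOf (Measure.map (f i p) (μ i))))
    (solvef solveg : (Fin n → ℝ) → (Fin n → ℝ))
    (hsolvef : ∀ (u : Fin n → ℝ) (i : Fin n), solvef u i = f i (solvef u) (u i))
    (hsolveg : ∀ (u : Fin n → ℝ) (i : Fin n), solveg u i = g i (solveg u) (u i))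
    (C : Set (Fin n)) (c : Fin n → ℝ)
    (solveCf solveCg : (Fin n → ℝ) → (Fin n → ℝ))
    (hsolveCf : ∀ u : Fin n → ℝ,
      (∀ i ∈ C, solveCf u i = c i) ∧ ∀ i ∉ C, solveCf u i = f i (solveCf u) (u i))
    (hsolveCg : ∀ u : Fin n → ℝ,
      (∀ i ∈ C, solveCg u i = c i) ∧ ∀ i ∉ C, solveCg u i = g i (solveCg u) (u i))
    (v : Fin n → ℝ) :
    solveCf (Function.invFun solvef v) = solveCg (Function.invFun solveg v) := by
  have hvf := solve_invFun_eq hpa hlocf (fun i v => (hbijf i v).2) hsolvef v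
  have hvg := solve_invFun_eq hpa hlocg (fun i v => (hbijg i v).2) hsolveg v
  set uf := Function.invFun solvef v
  set ug := Function.invFun solveg v
  have hnoise (i : Fin n) (p : Fin n → ℝ) : f i p (uf i) = g i p (ug i) := by
    refine apply_eq_of_map_eq (hmonof i) (hmonog i) (heq i) (hinj i) (p₀ := v) ?_ p
    have hf := hsolvef uf i
    have hg := hsolveg ug i
    rw [hvf] at hf
    rw [hvg] at hg
    exact hf.symm.trans hg
  refine eq_of_eq_of_forall_lt_eq fun i IH => ?_
  by_cases hi : i ∈ C
  · rw [(hsolveCf uf).1 i hi, (hsolveCg ug).1 i hi]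
  · rw [(hsolveCf uf).2 i hi, (hsolveCg ug).2 i hi, hnoise,
      hlocg i _ _ fun j hj => IH j (hpa i j hj)]

/-- Identifiable Natural Counterfactuals (model-independence form): two topologically
ordered SCMs `M = (pa, f, μ)` and `M' = (pa, g, μ')` with the same parent sets,
local mechanisms whose slices are strictly increasing bijections of ℝ, inducing
identical conditional distributions `Measure.map (f i p) (μ i) = Measure.map (g i p) (μ' i)`
with injective CDFs, produce identical counterfactuals: for every observed instance `v`,
every intervention set `C` and target values `c`,
`solveC_f (solve_f⁻¹ v) = solveC_g (solve_g⁻¹ v)`. -/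
theorem natural_counterfactuals_identifiable (n : ℕ) (pa : Fin n → Finset (Fin n))
    (hpa : ∀ i : Fin n, ∀ j ∈ pa i, j < i)
    (f g : Fin n → (Fin n → ℝ) → ℝ → ℝ)
    (hlocf : ∀ i : Fin n, ∀ v w : Fin n → ℝ, (∀ j ∈ pa i, v j = w j) → f i v = f i w)
    (hlocg : ∀ i : Fin n, ∀ v w : Fin n → ℝ, (∀ j ∈ pa i, v j = w j) → g i v = g i w)
    (hmonof : ∀ (i : Fin n) (v : Fin n → ℝ), StrictMono (f i v))
    (hmonog : ∀ (i : Fin n) (v : Fin n → ℝ), StrictMono (g i v))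
    (hbijf : ∀ (i : Fin n) (v : Fin n → ℝ), Function.Bijective (f i v))
    (hbijg : ∀ (i : Fin n) (v : Fin n → ℝ), Function.Bijective (g i v))
    (μ μ' : Fin n → Measure ℝ)
    [∀ i, IsProbabilityMeasure (μ i)] [∀ i, IsProbabilityMeasure (μ' i)]
    (heq : ∀ (i : Fin n) (p : Fin n → ℝ),
      Measure.map (f i p) (μ i) = Measure.map (g i p) (μ' i))
    (hinj : ∀ (i : Fin n) (p : Fin n → ℝ),
      Function.Injective (cdfOf (Measure.map (f i p) (μ i))))
    (solvef solveg : (Fin n → ℝ) → (Fin n → ℝ))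
    (hsolvef : ∀ (u : Fin n → ℝ) (i : Fin n), solvef u i = f i (solvef u) (u i))
    (hsolveg : ∀ (u : Fin n → ℝ) (i : Fin n), solveg u i = g i (solveg u) (u i))
    (C : Set (Fin n)) (c : Fin n → ℝ)
    (solveCf solveCg : (Fin n → ℝ) → (Fin n → ℝ))
    (hsolveCf : ∀ u : Fin n → ℝ,
      (∀ i ∈ C, solveCf u i = c i) ∧ ∀ i ∉ C, solveCf u i = f i (solveCf u) (u i))
    (hsolveCg : ∀ u : Fin n → ℝ,
      (∀ i ∈ C, solveCg u i = c i) ∧ ∀ i ∉ C, solveCg u i = g i (solveCg u) (u i))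
    (v : Fin n → ℝ) :
    solveCf (Function.invFun solvef v) = solveCg (Function.invFun solveg v) :=
  natural_counterfactuals_identifiable_general n pa hpa f g hlocf hlocg hmonof hmonog hbijf hbijg μ
    μ' heq hinj solvef solveg hsolvef hsolveg C c solveCf solveCg hsolveCf hsolveCg v
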